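/- Suppose 𝒥 is a T₀-system. Let t ↦ μ^t (t ≥ 0) be a solution of the recombination equation such that μ^t is a probability mass function on X for every t, and suppose all one-dimensional marginals of the initial condition are strictly positive: μ_i^0(a) > 0 for every i ∈ Λ and a ∈ K_i. Then for all sufficiently large t, μ^t(x) > 0 for every x ∈ X, i.e., supp μ^t = X. -/

import Mathlib

open Finset

/-- Restriction of a word to a set of coordinates `M`. -/
def restrictW {Λ : Type*} (K : Λ → Type*) (M : Finset Λ) (x : ∀ i, K i) :
    ∀ i : M, K i := fun i => x i

/-- Marginal of `μ` on the set of coordinates `M`. -/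
def marginal {Λ : Type*} [Fintype Λ] [DecidableEq Λ] (K : Λ → Type*)
    [∀ i, Fintype (K i)] [∀ i, DecidableEq (K i)]
    (μ : (∀ i, K i) → ℝ) (M : Finset Λ) (a : ∀ i : M, K i) : ℝ :=
  ∑ x : ∀ i, K i, if restrictW K M x = a then μ x else 0

/-- One-dimensional marginal of `μ` at coordinate `i`. -/
def marg1 {Λ : Type*} [Fintype Λ] [DecidableEq Λ] (K : Λ → Type*)
    [∀ i, Fintype (K i)] [∀ i, DecidableEq (K i)]
    (μ : (∀ i, K i) → ℝ) (i : Λ) (a : K i) : ℝ :=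
  ∑ x : ∀ i, K i, if x i = a then μ x else 0

/-- `I`-recombination: the word equal to `a` on `I` and to `x` off `I`. -/
def recombW {Λ : Type*} [DecidableEq Λ] (K : Λ → Type*) (I : Finset Λ)
    (x : ∀ i, K i) (a : ∀ i : I, K i) : ∀ i, K i :=
  fun i => if h : i ∈ I then a ⟨i, h⟩ else x i

/-- Right hand side of the recombination equation. -/
def recombRHS {Λ : Type*} [Fintype Λ] [DecidableEq Λ] (K : Λ → Type*)
    [∀ i, Fintype (K i)] [∀ i, DecidableEq (K i)]
    (𝒥 : Finset (Finset Λ))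
    (φ : ∀ I : Finset Λ, (∀ i : I, K i) → (∀ i : I, K i) → ℝ)
    (μ : (∀ i, K i) → ℝ) (x : ∀ i, K i) : ℝ :=
  ∑ I ∈ 𝒥, ∑ y : ∀ i : I, K i,
    (φ I y (restrictW K I x) * marginal K μ I (restrictW K I x) * μ (recombW K I x y)
      - φ I (restrictW K I x) y * marginal K μ I y * μ x)

/-- A probability mass function on `∀ i, K i`. -/
def IsPMF {Λ : Type*} [Fintype Λ] [DecidableEq Λ] (K : Λ → Type*) [∀ i, Fintype (K i)]
    (μ : (∀ i, K i) → ℝ) : Prop :=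
  (∀ x, 0 ≤ μ x) ∧ ∑ x : ∀ i, K i, μ x = 1

/-- `𝒥`-separated measure. -/
def IsSeparated {Λ : Type*} [Fintype Λ] [DecidableEq Λ] (K : Λ → Type*)
    [∀ i, Fintype (K i)] [∀ i, DecidableEq (K i)]
    (𝒥 : Finset (Finset Λ)) (μ : (∀ i, K i) → ℝ) : Prop :=
  ∀ I ∈ 𝒥, ∀ x, μ x = marginal K μ I (restrictW K I x) * marginal K μ Iᶜ (restrictW K Iᶜ x)

/-- A `T₀`-system of frames. -/
def IsT0 {Λ : Type*} (𝒥 : Finset (Finset Λ)) : Prop :=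
  ∀ i j : Λ, i ≠ j → ∃ I ∈ 𝒥, (i ∈ I ∧ j ∉ I) ∨ (j ∈ I ∧ i ∉ I)

/-!
Each coordinate value is carried by some word of positive mass at time `0`. A positive word
stays positive, since the gain term of the equation is nonnegative and the loss term is at most
a constant times `μ^t(x)`; so `μ^t(x) e^{Ct}` is nondecreasing. If two words `x`, `y` are
positive at some time, their `I`-recombinant for `I ∈ 𝒥` has a strictly positive gain term, so
it becomes positive immediately if it is not already. Hence the set of words that are positive at
some time is closed under recombination along frames of `𝒥`, and the `T₀` property lets one glue
any word together from words carrying its single coordinates.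
-/

open Filter

section Calculus

lemma pos_of_hasDerivWithinAt_ge_neg_mul {f f' : ℝ → ℝ} {C s t : ℝ}
    (hf : ∀ r ∈ Set.Ici s, HasDerivWithinAt f (f' r) (Set.Ici s) r)
    (hf' : ∀ r ∈ Set.Ici s, -C * f r ≤ f' r) (hs : 0 < f s) (hst : s ≤ t) : 0 < f t := by
  have hderiv : ∀ r ∈ Set.Ici s, HasDerivWithinAt (fun r => f r * Real.exp (C * r))
      (f' r * Real.exp (C * r) + f r * (Real.exp (C * r) * (C * 1))) (Set.Ici s) r :=
    fun r hr => (hf r hr).mul (((hasDerivAt_id r).const_mul C).exp).hasDerivWithinAt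
  have hmono : MonotoneOn (fun r => f r * Real.exp (C * r)) (Set.Ici s) := by
    refine monotoneOn_of_hasDerivWithinAt_nonneg (convex_Ici s)
      (f' := fun r => f' r * Real.exp (C * r) + f r * (Real.exp (C * r) * (C * 1)))
      (fun r hr => (hderiv r hr).continuousWithinAt) (fun r hr => ?_) (fun r hr => ?_)
    · exact (hderiv r (interior_subset hr)).mono interior_subset
    · have := hf' r (interior_subset hr)
      have := Real.exp_pos (C * r)
      nlinarith
  have hle := hmono Set.self_mem_Ici hst hst
  exact pos_of_mul_pos_left ((mul_pos hs (Real.exp_pos _)).trans_le hle) (Real.exp_pos _).le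

lemma exists_gt_of_hasDerivWithinAt_Ici_pos {f : ℝ → ℝ} {f' s : ℝ}
    (hf : HasDerivWithinAt f f' (Set.Ici s) s) (hf' : 0 < f') : ∃ t > s, f s < f t := by
  have hslope : Tendsto (slope f s) (nhdsWithin s (Set.Ioi s)) (nhds f') :=
    (hasDerivWithinAt_iff_tendsto_slope' (lt_irrefl s)).mp hf.Ioi_of_Ici
  obtain ⟨t, hpos, hst⟩ :=
    ((hslope.eventually (eventually_gt_nhds hf')).and self_mem_nhdsWithin).exists
  exact ⟨t, hst, (slope_pos_iff_of_le (le_of_lt hst)).mp hpos⟩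

end Calculus

section Recombination

variable {Λ : Type*} [DecidableEq Λ] {K : Λ → Type*}

lemma restrictW_recombW (I : Finset Λ) (x : ∀ i, K i) (a : ∀ i : I, K i) :
    restrictW K I (recombW K I x a) = a := by
  funext i
  simp [restrictW, recombW, i.2]

lemma recombW_restrictW_of_eqOn_compl {I : Finset Λ} {u x : ∀ i, K i}
    (h : ∀ i ∉ I, u i = x i) : recombW K I u (restrictW K I x) = x := by
  funext i
  by_cases hi : i ∈ I <;> simp [recombW, restrictW, hi, h]

lemma recombW_recombW_restrictW (I : Finset Λ) (x y : ∀ i, K i) :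
    recombW K I (recombW K I x (restrictW K I y)) (restrictW K I x) = x :=
  recombW_restrictW_of_eqOn_compl fun i hi => by simp [recombW, hi]

variable [Fintype Λ] [∀ i, Fintype (K i)] {ν : (∀ i, K i) → ℝ}

lemma IsPMF.exists_pos (hν : IsPMF K ν) : ∃ x, 0 < ν x := by
  obtain ⟨x, -, hx⟩ := exists_ne_zero_of_sum_ne_zero (hν.2.symm ▸ one_ne_zero)
  exact ⟨x, (hν.1 x).lt_of_ne' hx⟩

variable [∀ i, DecidableEq (K i)]

lemma marginal_nonneg (hν : ∀ x, 0 ≤ ν x) (I : Finset Λ) (a : ∀ i : I, K i) :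
    0 ≤ marginal K ν I a :=
  sum_nonneg fun x _ => by split_ifs <;> simp [hν x]

lemma marginal_le_one (hν : IsPMF K ν) (I : Finset Λ) (a : ∀ i : I, K i) :
    marginal K ν I a ≤ 1 :=
  hν.2 ▸ sum_le_sum fun x _ => by split_ifs <;> simp [hν.1 x]

lemma le_marginal_restrictW (hν : ∀ x, 0 ≤ ν x) (I : Finset Λ) (x : ∀ i, K i) :
    ν x ≤ marginal K ν I (restrictW K I x) := by
  simpa [marginal] using single_le_sum (f := fun z => if restrictW K I z = restrictW K I x
    then ν z else 0) (fun z _ => by split_ifs <;> simp [hν z]) (mem_univ x)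

lemma exists_pos_of_marg1_pos (hν : ∀ x, 0 ≤ ν x) {i : Λ} {a : K i}
    (h : 0 < marg1 K ν i a) : ∃ x, 0 < ν x ∧ x i = a := by
  obtain ⟨x, -, hx⟩ := exists_ne_zero_of_sum_ne_zero h.ne'
  by_cases hxi : x i = a
  · rw [if_pos hxi] at hx
    exact ⟨x, (hν x).lt_of_ne' hx, hxi⟩
  · exact absurd (if_neg hxi) hx

end Recombination

section RecombClosed

variable {Λ : Type*} [DecidableEq Λ] {K : Λ → Type*}

def RecombClosed (𝒥 : Finset (Finset Λ)) (S : Set (∀ i, K i)) : Prop :=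
  ∀ I ∈ 𝒥, ∀ x ∈ S, ∀ y ∈ S, recombW K I x (restrictW K I y) ∈ S

/-- Two sites lie in the same atom of the Boolean algebra generated by `𝒜` iff their signatures
agree, so for a `T₀`-system the atoms are singletons. -/
def frameSignature (𝒜 : Finset (Finset Λ)) (i : Λ) : Finset (Finset Λ) :=
  𝒜.filter (i ∈ ·)

lemma IsT0.injective_frameSignature {𝒥 : Finset (Finset Λ)} (hT0 : IsT0 𝒥) :
    Function.Injective (frameSignature 𝒥) := by
  intro i j hij
  by_contra hne
  obtain ⟨I, hI, hsep⟩ := hT0 i j hne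
  have hiff : i ∈ I ↔ j ∈ I := by
    simpa [frameSignature, hI] using congrArg (I ∈ ·) hij
  tauto

variable {𝒥 : Finset (Finset Λ)} {S : Set (∀ i, K i)}

lemma RecombClosed.glue_mem (hS : RecombClosed 𝒥 S) {𝒜 : Finset (Finset Λ)} (h𝒜 : 𝒜 ⊆ 𝒥)
    (g : Finset (Finset Λ) → ∀ i, K i) (hg : ∀ v, g v ∈ S) :
    (fun i => g (frameSignature 𝒜 i) i) ∈ S := by
  induction 𝒜 using Finset.induction_on generalizing g with
  | empty => simpa [frameSignature] using hg ∅
  | insert I 𝒜 _ ih =>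
    have h𝒜' := (subset_insert I 𝒜).trans h𝒜
    convert hS I (h𝒜 (mem_insert_self I 𝒜)) _ (ih h𝒜' g hg)
      _ (ih h𝒜' (fun v => g (insert I v)) fun v => hg _) using 1
    funext i
    by_cases hi : i ∈ I <;> simp [recombW, restrictW, frameSignature, filter_insert, hi]

theorem RecombClosed.eq_univ (hT0 : IsT0 𝒥) (hS : RecombClosed 𝒥 S) (hne : S.Nonempty)
    (hcoord : ∀ i (a : K i), ∃ z ∈ S, z i = a) : S = Set.univ := by
  refine Set.eq_univ_of_forall fun x => ?_
  choose z hzS hz using hcoord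
  obtain ⟨z₀, hz₀⟩ := hne
  have hg (v) : Function.extend (frameSignature 𝒥) (fun i => z i (x i)) (fun _ => z₀) v ∈ S := by
    classical
    rw [Function.extend_def]
    split_ifs
    exacts [hzS _ _, hz₀]
  convert hS.glue_mem subset_rfl _ hg with i
  rw [hT0.injective_frameSignature.extend_apply, hz]

end RecombClosed

section RecombinationEquation

variable {Λ : Type*} [Fintype Λ] [DecidableEq Λ] {K : Λ → Type*}
  [∀ i, Fintype (K i)] [∀ i, DecidableEq (K i)] {𝒥 : Finset (Finset Λ)}
  {φ : ∀ I : Finset Λ, (∀ i : I, K i) → (∀ i : I, K i) → ℝ}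

lemma neg_mul_le_recombRHS (hφpos : ∀ I ∈ 𝒥, ∀ a b, 0 < φ I a b) {ν : (∀ i, K i) → ℝ}
    (hν : IsPMF K ν) (x : ∀ i, K i) :
    -(∑ I ∈ 𝒥, ∑ y : ∀ i : I, K i, φ I (restrictW K I x) y) * ν x ≤ recombRHS K 𝒥 φ ν x := by
  simp only [recombRHS, neg_mul, sum_mul, ← sum_neg_distrib]
  refine sum_le_sum fun I hI => sum_le_sum fun y _ => ?_
  have hgain : 0 ≤ φ I y (restrictW K I x) * marginal K ν I (restrictW K I x)
      * ν (recombW K I x y) :=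
    mul_nonneg (mul_nonneg (hφpos I hI _ _).le (marginal_nonneg hν.1 I _)) (hν.1 _)
  have hloss : φ I (restrictW K I x) y * marginal K ν I y * ν x
      ≤ φ I (restrictW K I x) y * ν x := by
    have := mul_le_mul_of_nonneg_left (marginal_le_one hν I y)
      (mul_nonneg (hφpos I hI (restrictW K I x) y).le (hν.1 x))
    linarith
  linarith

lemma recombRHS_pos_of_eq_zero (hφpos : ∀ I ∈ 𝒥, ∀ a b, 0 < φ I a b) {ν : (∀ i, K i) → ℝ}
    (hν : IsPMF K ν) {I : Finset Λ} (hI : I ∈ 𝒥) {x y : ∀ i, K i} (hx : 0 < ν x)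
    (hy : 0 < ν y) (h : ν (recombW K I x (restrictW K I y)) = 0) :
    0 < recombRHS K 𝒥 φ ν (recombW K I x (restrictW K I y)) := by
  have hgain : ∀ J ∈ 𝒥, ∀ (z : ∀ i, K i) (b : ∀ i : J, K i),
      0 ≤ φ J b (restrictW K J z) * marginal K ν J (restrictW K J z) * ν (recombW K J z b) :=
    fun J hJ z b =>
      mul_nonneg (mul_nonneg (hφpos J hJ _ _).le (marginal_nonneg hν.1 J _)) (hν.1 _)
  simp only [recombRHS, h, mul_zero, sub_zero]
  refine sum_pos' (fun J hJ => sum_nonneg fun b _ => hgain J hJ _ b)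
    ⟨I, hI, sum_pos' (fun b _ => hgain I hI _ b) ⟨restrictW K I x, mem_univ _, ?_⟩⟩
  rw [restrictW_recombW, recombW_recombW_restrictW]
  exact mul_pos (mul_pos (hφpos I hI _ _) (hy.trans_le (le_marginal_restrictW hν.1 I y))) hx

end RecombinationEquation

namespace Recombination

variable {Λ : Type*} [Fintype Λ] [DecidableEq Λ] {K : Λ → Type*}
  [∀ i, Fintype (K i)] [∀ i, DecidableEq (K i)] {𝒥 : Finset (Finset Λ)}
  {φ : ∀ I : Finset Λ, (∀ i : I, K i) → (∀ i : I, K i) → ℝ} {μ : ℝ → (∀ i, K i) → ℝ}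

lemma pos_of_pos_of_le (hφpos : ∀ I ∈ 𝒥, ∀ a b, 0 < φ I a b)
    (hsol : ∀ x, ∀ t ∈ Set.Ici (0 : ℝ),
      HasDerivWithinAt (fun s => μ s x) (recombRHS K 𝒥 φ (μ t) x) (Set.Ici (0 : ℝ)) t)
    (hpmf : ∀ t ∈ Set.Ici (0 : ℝ), IsPMF K (μ t)) {x : ∀ i, K i} {s t : ℝ} (hs : 0 ≤ s)
    (hx : 0 < μ s x) (hst : s ≤ t) : 0 < μ t x :=
  pos_of_hasDerivWithinAt_ge_neg_mul
    (fun r hr => (hsol x r (hs.trans hr)).mono (Set.Ici_subset_Ici.2 hs))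
    (fun r hr => neg_mul_le_recombRHS hφpos (hpmf r (hs.trans hr)) x) hx hst

lemma recombClosed_setOf_exists_pos (hφpos : ∀ I ∈ 𝒥, ∀ a b, 0 < φ I a b)
    (hsol : ∀ x, ∀ t ∈ Set.Ici (0 : ℝ),
      HasDerivWithinAt (fun s => μ s x) (recombRHS K 𝒥 φ (μ t) x) (Set.Ici (0 : ℝ)) t)
    (hpmf : ∀ t ∈ Set.Ici (0 : ℝ), IsPMF K (μ t)) :
    RecombClosed 𝒥 {x | ∃ t, 0 ≤ t ∧ 0 < μ t x} := by
  rintro I hI x ⟨tx, htx, hx⟩ y ⟨ty, hty, hy⟩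
  set u := recombW K I x (restrictW K I y)
  set s := max tx ty
  have hs : 0 ≤ s := htx.trans (le_max_left _ _)
  by_cases hu : 0 < μ s u
  · exact ⟨s, hs, hu⟩
  have hu0 : μ s u = 0 := le_antisymm (not_lt.mp hu) ((hpmf s hs).1 u)
  have hrhs : 0 < recombRHS K 𝒥 φ (μ s) u :=
    recombRHS_pos_of_eq_zero hφpos (hpmf s hs) hI
      (pos_of_pos_of_le hφpos hsol hpmf htx hx (le_max_left _ _))
      (pos_of_pos_of_le hφpos hsol hpmf hty hy (le_max_right _ _)) hu0
  obtain ⟨t, hst, ht⟩ := exists_gt_of_hasDerivWithinAt_Ici_pos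
    ((hsol u s hs).mono (Set.Ici_subset_Ici.2 hs)) hrhs
  exact ⟨t, hs.trans hst.le, hu0 ▸ ht⟩

end Recombination

theorem full_support_eventually_general {Λ : Type*} [Fintype Λ] [DecidableEq Λ]
    (K : Λ → Type*) [∀ i, Fintype (K i)] [∀ i, DecidableEq (K i)]
    (𝒥 : Finset (Finset Λ)) (hT0 : IsT0 𝒥)
    (φ : ∀ I : Finset Λ, (∀ i : I, K i) → (∀ i : I, K i) → ℝ)
    (hφpos : ∀ I ∈ 𝒥, ∀ a b, 0 < φ I a b)
    (μ : ℝ → (∀ i, K i) → ℝ)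
    (hsol : ∀ x, ∀ t ∈ Set.Ici (0 : ℝ),
      HasDerivWithinAt (fun s => μ s x) (recombRHS K 𝒥 φ (μ t) x) (Set.Ici (0 : ℝ)) t)
    (hpmf : ∀ t ∈ Set.Ici (0 : ℝ), IsPMF K (μ t))
    (hpos : ∀ i : Λ, ∀ a : K i, 0 < marg1 K (μ 0) i a) :
    ∃ T : ℝ, ∀ t ≥ T, ∀ x, 0 < μ t x := by
  open Recombination in
  set S : Set (∀ i, K i) := {x | ∃ t, 0 ≤ t ∧ 0 < μ t x}
  have hpmf₀ := hpmf 0 Set.self_mem_Ici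
  have hne : S.Nonempty :=
    let ⟨x, hx⟩ := hpmf₀.exists_pos
    ⟨x, 0, le_rfl, hx⟩
  have hcoord (i : Λ) (a : K i) : ∃ z ∈ S, z i = a :=
    let ⟨z, hz, hzi⟩ := exists_pos_of_marg1_pos hpmf₀.1 (hpos i a)
    ⟨z, ⟨0, le_rfl, hz⟩, hzi⟩
  have hall : S = Set.univ :=
    (recombClosed_setOf_exists_pos hφpos hsol hpmf).eq_univ hT0 hne hcoord
  have hev (x : ∀ i, K i) : ∀ᶠ t in atTop, 0 < μ t x := by
    obtain ⟨s, hs, hx⟩ : x ∈ S := hall ▸ Set.mem_univ x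
    exact eventually_atTop.2 ⟨s, fun t hst => pos_of_pos_of_le hφpos hsol hpmf hs hx hst⟩
  exact eventually_atTop.1 (eventually_all.2 hev)

/-- if `𝒥` is a `T₀`-system and all one-dimensional marginals of the initial
condition are strictly positive, then for all sufficiently large `t` the measure `μ^t` is
strictly positive everywhere, i.e. `supp μ^t = X`. -/
theorem full_support_eventually {Λ : Type*} [Fintype Λ] [DecidableEq Λ] [Nonempty Λ]
    (K : Λ → Type*) [∀ i, Fintype (K i)] [∀ i, DecidableEq (K i)] [∀ i, Nonempty (K i)]
    (𝒥 : Finset (Finset Λ)) (hT0 : IsT0 𝒥)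
    (φ : ∀ I : Finset Λ, (∀ i : I, K i) → (∀ i : I, K i) → ℝ)
    (hφpos : ∀ I ∈ 𝒥, ∀ a b, 0 < φ I a b)
    (hφsymm : ∀ I ∈ 𝒥, ∀ a b, φ I a b = φ I b a)
    (μ : ℝ → (∀ i, K i) → ℝ)
    (hsol : ∀ x, ∀ t ∈ Set.Ici (0 : ℝ),
      HasDerivWithinAt (fun s => μ s x) (recombRHS K 𝒥 φ (μ t) x) (Set.Ici (0 : ℝ)) t)
    (hpmf : ∀ t ∈ Set.Ici (0 : ℝ), IsPMF K (μ t))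
    (hpos : ∀ i : Λ, ∀ a : K i, 0 < marg1 K (μ 0) i a) :
    ∃ T : ℝ, ∀ t ≥ T, ∀ x, 0 < μ t x :=
  full_support_eventually_general K 𝒥 hT0 φ hφpos μ hsol hpmf hpos
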